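/- arXiv:1705.07499 — 2 statements merged into one kernel-verified Lean document; each statement's English description precedes it below -/
import Mathlib

section
/- Let n ≥ 1, let L be a finite set, let λ be a permutation of [n] ∪ L, set ρ = λ⁻¹ ∘ ζ_n, let 0 ≤ i ≤ n, and set a = ρ(i). Then D_i(ρ) = (D_i(λ ∘ (a i)))⁻¹ ∘ ζ_{n−1}, where (a i) denotes the transposition exchanging a and i (the identity permutation if a = i). In other words, the face of the non-degenerate boundary permutation ρ associated to the fat structure λ is the non-degenerate boundary permutation associated to the fat structure D_i(λ ∘ (a i)). -/
/-- `Option α ⊕ β ≃ Option (α ⊕ β)`, sending `inl none` to `none`. -/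
def optionSumEquiv (α β : Type*) : (Option α ⊕ β) ≃ Option (α ⊕ β) where
  toFun x :=
    match x with
    | Sum.inl (some a) => some (Sum.inl a)
    | Sum.inl none => none
    | Sum.inr b => some (Sum.inr b)
  invFun x :=
    match x with
    | some (Sum.inl a) => Sum.inl (some a)
    | some (Sum.inr b) => Sum.inr b
    | none => Sum.inl none
  left_inv x := by rcases x with (_ | a) | b <;> rfl
  right_inv x := by rcases x with _ | (a | b) <;> rfl

/-- The identification of `[n] ∪ L` with `Option ([n-1] ∪ L)` sending `i` to `none`:
away from `i` it is the order-preserving renormalization `[n] \ {i} → [n-1]`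
(the inverse of `d_i`, i.e. the map `s_i` restricted to `[n] \ {i}`), and the identity on `L`. -/
def faceEquiv (n : ℕ) (L : Type*) (i : Fin (n + 1)) :
    (Fin (n + 1) ⊕ L) ≃ Option (Fin n ⊕ L) :=
  ((finSuccEquiv' i).sumCongr (Equiv.refl L)).trans (optionSumEquiv (Fin n) L)

/-- The `i`-th face map `D_i : Symm([n] ∪ L) → Symm([n-1] ∪ L)`, given by
`D_i(α) = s_i ∘ α ∘ (i α⁻¹(i)) ∘ d_i`, i.e. removing the symbol `i` from the cycle
decomposition of `α` and renormalizing the remaining elements of `[n]`. -/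
def faceMap {n : ℕ} {L : Type*} (i : Fin (n + 1)) (α : Equiv.Perm (Fin (n + 1) ⊕ L)) :
    Equiv.Perm (Fin n ⊕ L) :=
  Equiv.removeNone (((faceEquiv n L i).symm.trans α).trans (faceEquiv n L i))


/-- The long cycle `ζ_n = (0 1 … n)` in `Symm([n] ∪ L)`: it sends `j ↦ j+1 (mod n+1)`
on `[n]` and fixes every element of `L`. -/
def longCycle (n : ℕ) (L : Type*) : Equiv.Perm (Fin (n + 1) ⊕ L) :=
  Equiv.sumCongr (finRotate (n + 1)) (Equiv.refl L)

section Aux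

variable {L : Type} [DecidableEq L]

private lemma mod_small (x m : ℕ) (h : x < 2 * m) (hm : 0 < m) :
    x % m = if x < m then x else x - m := by
  split_ifs with h'
  · exact Nat.mod_eq_of_lt h'
  · rw [Nat.mod_eq_sub_mod (le_of_not_gt h'), Nat.mod_eq_of_lt (by omega)]

private lemma succAbove_val {n : ℕ} (i : Fin (n + 2)) (j : Fin (n + 1)) :
    (i.succAbove j).val = if j.val < i.val then j.val else j.val + 1 := by
  rcases lt_or_ge (j.castSucc) i with h | h
  · rw [Fin.succAbove_of_castSucc_lt _ _ h]
    have h' : (j : ℕ) < (i : ℕ) := by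
      have := Fin.lt_def.mp h
      simpa using this
    simp only [Fin.coe_castSucc]
    rw [if_pos h']
  · rw [Fin.succAbove_of_le_castSucc _ _ h]
    have h' : (i : ℕ) ≤ (j : ℕ) := by
      have := Fin.le_def.mp h
      simpa using this
    simp only [Fin.val_succ]
    rw [if_neg (by omega)]

private lemma keyA {n : ℕ} (i : Fin (n + 2)) (j : Fin (n + 1))
    (h : i.succAbove j + 1 = i) : i + 1 = i.succAbove (j + 1) := by
  have hi := i.isLt
  have hj := j.isLt
  rw [Fin.ext_iff] at h ⊢
  simp only [Fin.val_add_one, succAbove_val, Fin.val_last] at h ⊢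
  split_ifs at h ⊢ <;>
    simp only [Fin.ext_iff, succAbove_val, Fin.val_last] at * <;>
    split_ifs at * <;> omega

private lemma keyB {n : ℕ} (i : Fin (n + 2)) (j : Fin (n + 1))
    (h : ¬(i.succAbove j + 1 = i)) : i.succAbove j + 1 = i.succAbove (j + 1) := by
  have hi := i.isLt
  have hj := j.isLt
  rw [Fin.ext_iff] at h ⊢
  simp only [Fin.val_add_one, succAbove_val, Fin.val_last] at h ⊢
  split_ifs at h ⊢ <;>
    simp only [Fin.ext_iff, succAbove_val, Fin.val_last] at * <;>
    split_ifs at * <;> omega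

private lemma faceEquiv_inl {n : ℕ} (i m : Fin (n + 1)) :
    faceEquiv n L i (Sum.inl m) = (finSuccEquiv' i m).map Sum.inl := by
  simp only [faceEquiv, Equiv.trans_apply, Equiv.sumCongr_apply, Sum.map_inl]
  cases finSuccEquiv' i m <;> rfl

private lemma faceEquiv_inr {n : ℕ} (i : Fin (n + 1)) (l : L) :
    faceEquiv n L i (Sum.inr l) = some (Sum.inr l) := rfl

private lemma faceEquiv_symm_none {n : ℕ} (i : Fin (n + 1)) :
    (faceEquiv n L i).symm none = Sum.inl i := by
  simp only [faceEquiv, Equiv.symm_trans_apply]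
  show ((finSuccEquiv' i).sumCongr (Equiv.refl L)).symm (Sum.inl none) = Sum.inl i
  simp [Equiv.sumCongr_symm]

private lemma faceEquiv_symm_some_inl {n : ℕ} (i : Fin (n + 1)) (j : Fin n) :
    (faceEquiv n L i).symm (some (Sum.inl j)) = Sum.inl (i.succAbove j) := by
  simp only [faceEquiv, Equiv.symm_trans_apply]
  show ((finSuccEquiv' i).sumCongr (Equiv.refl L)).symm (Sum.inl (some j)) = _
  simp [Equiv.sumCongr_symm, finSuccEquiv'_symm_some]

private lemma faceEquiv_symm_some_inr {n : ℕ} (i : Fin (n + 1)) (l : L) :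
    (faceEquiv n L i).symm (some (Sum.inr l)) = Sum.inr l := by
  simp only [faceEquiv, Equiv.symm_trans_apply]
  show ((finSuccEquiv' i).sumCongr (Equiv.refl L)).symm (Sum.inr l) = _
  simp [Equiv.sumCongr_symm]

private lemma longCycle_inl {n : ℕ} (j : Fin (n + 1)) :
    longCycle n L (Sum.inl j) = Sum.inl (j + 1) := by
  simp [longCycle]

private lemma longCycle_inr {n : ℕ} (l : L) :
    longCycle n L (Sum.inr l) = Sum.inr l := rfl

private lemma faceEquiv_apply_i {n : ℕ} (i : Fin (n + 1)) :
    faceEquiv n L i (Sum.inl i) = none := by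
  rw [faceEquiv_inl, finSuccEquiv'_at]; rfl

private lemma faceMap_longCycle {n : ℕ} (i : Fin (n + 2)) :
    faceMap (L := L) i (longCycle (n + 1) L) = longCycle n L := by
  set F := faceEquiv (n + 1) L i with hF
  set E := ((F.symm.trans (longCycle (n + 1) L)).trans F) with hE
  have hmap : faceMap (L := L) i (longCycle (n + 1) L) = Equiv.removeNone E := rfl
  rw [hmap]
  ext x
  rcases x with j | l
  · -- case inl j
    have hEj : E (some (Sum.inl j)) = (finSuccEquiv' i (i.succAbove j + 1)).map Sum.inl := by
      rw [hE]
      simp only [Equiv.trans_apply]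
      rw [hF, faceEquiv_symm_some_inl, longCycle_inl, faceEquiv_inl]
    rw [longCycle_inl]
    by_cases hc : i.succAbove j + 1 = i
    · have hnone : E (some (Sum.inl j)) = none := by
        rw [hEj, hc, finSuccEquiv'_at]; rfl
      have h1 := Equiv.removeNone_none E hnone
      have hEnone : E none = some (Sum.inl (j + 1)) := by
        rw [hE]
        simp only [Equiv.trans_apply]
        rw [hF, faceEquiv_symm_none, longCycle_inl, faceEquiv_inl,
          keyA i j hc, finSuccEquiv'_succAbove]
        rfl
      rw [hEnone] at h1
      exact Option.some_injective _ h1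
    · have hsome : E (some (Sum.inl j)) = some (Sum.inl (j + 1)) := by
        rw [hEj, keyB i j hc, finSuccEquiv'_succAbove]; rfl
      have h1 := Equiv.removeNone_some E ⟨_, hsome⟩
      rw [hsome] at h1
      exact Option.some_injective _ h1
  · -- case inr l
    have hsome : E (some (Sum.inr l)) = some (Sum.inr l) := by
      rw [hE]
      simp only [Equiv.trans_apply]
      rw [hF, faceEquiv_symm_some_inr, longCycle_inr, faceEquiv_inr]
    have h1 := Equiv.removeNone_some E ⟨_, hsome⟩
    rw [hsome] at h1
    rw [longCycle_inr]
    exact Option.some_injective _ h1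

end Aux

/-- For `n ≥ 1` (here `[n]` is realized as `Fin (n+2)` with `n ↦ n+1`),
a finite set `L`, a permutation `λ` of `[n] ∪ L`, with `ρ = λ⁻¹ ∘ ζ_n`, `0 ≤ i ≤ n` and
`a = ρ(i)`, one has `D_i(ρ) = (D_i(λ ∘ (a i)))⁻¹ ∘ ζ_{n-1}`, where `(a i)` is the
transposition exchanging `a` and `i` (the identity if `a = i`). -/
theorem stmt_3 {L : Type} [Finite L] [DecidableEq L] (n : ℕ)
    (lam : Equiv.Perm (Fin (n + 2) ⊕ L)) (i : Fin (n + 2)) :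
    faceMap i (lam⁻¹ * longCycle (n + 1) L) =
      (faceMap i
          (lam * Equiv.swap ((lam⁻¹ * longCycle (n + 1) L) (Sum.inl i)) (Sum.inl i)))⁻¹ *
        longCycle n L := by
  set ζ := longCycle (n + 1) L with hζ
  set ρ := lam⁻¹ * ζ with hρ
  set a := ρ (Sum.inl i) with ha
  set σ := lam * Equiv.swap a (Sum.inl i) with hσ
  set F := faceEquiv (n + 1) L i with hF
  have hface : ∀ α : Equiv.Perm (Fin (n + 2) ⊕ L),
      faceMap i α = Equiv.removeNone (F.permCongr α) := fun α => rfl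
  have hmul : ∀ a b : Equiv.Perm (Option (Fin (n + 1) ⊕ L)) , True := fun _ _ => trivial
  -- optionCongr is injective, apply it to both sides
  apply Equiv.optionCongr_injective
  have hoptmul : ∀ p q : Equiv.Perm (Fin (n + 1) ⊕ L),
      Equiv.optionCongr (p * q) = Equiv.optionCongr p * Equiv.optionCongr q := by
    intro p q
    ext x
    cases x <;> simp [Equiv.Perm.mul_apply]
  have hoptinv : ∀ p : Equiv.Perm (Fin (n + 1) ⊕ L),
      Equiv.optionCongr p⁻¹ = (Equiv.optionCongr p)⁻¹ :=
    fun p => (Equiv.optionCongr_symm p).symm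
  rw [hface, hface, hoptmul, hoptinv, map_equiv_removeNone, map_equiv_removeNone]
  have hz : Equiv.optionCongr (longCycle n L) =
      Equiv.swap none (F.permCongr ζ none) * F.permCongr ζ := by
    rw [← faceMap_longCycle (L := L) i]
    exact map_equiv_removeNone _
  rw [hz]
  -- compute the values at none
  have hFi : F (Sum.inl i) = none := faceEquiv_apply_i i
  have hv1 : F.permCongr ρ none = F a := by
    rw [Equiv.permCongr_apply, hF, faceEquiv_symm_none, ← ha, ← hF]
  have hlama : lam a = ζ (Sum.inl i) := by
    rw [ha, hρ]
    simp [Equiv.Perm.mul_apply]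
  have hv2 : F.permCongr σ none = F (ζ (Sum.inl i)) := by
    rw [Equiv.permCongr_apply, hF, faceEquiv_symm_none, ← hF, hσ]
    simp only [Equiv.Perm.mul_apply, Equiv.swap_apply_right]
    rw [hlama]
  have hvz : F.permCongr ζ none = F (ζ (Sum.inl i)) := by
    rw [Equiv.permCongr_apply, hF, faceEquiv_symm_none, ← hF]
  rw [hv1, hv2, hvz]
  -- key conjugation identity
  have hpc : ∀ p q : Equiv.Perm (Fin (n + 2) ⊕ L),
      F.permCongr p * F.permCongr q = F.permCongr (p * q) := by
    intro p q
    show (F.permCongr q).trans (F.permCongr p) = F.permCongr (q.trans p)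
    exact Equiv.permCongr_trans (e := F) q p
  have hswap : Equiv.swap none (F a) = F.permCongr (Equiv.swap (Sum.inl i) a) := by
    rw [Equiv.permCongr_def, Equiv.symm_trans_swap_trans, hFi]
  have hgrp : σ * Equiv.swap (Sum.inl i) a * ρ = ζ := by
    rw [hσ, hρ, Equiv.swap_comm (Sum.inl i) a]
    simp [mul_assoc]
  have key : F.permCongr σ * Equiv.swap none (F a) * F.permCongr ρ = F.permCongr ζ := by
    rw [hswap, hpc, hpc, hgrp]
  rw [mul_inv_rev, Equiv.swap_inv, mul_assoc, ← mul_assoc (Equiv.swap none (F (ζ (Sum.inl i))))]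
  rw [Equiv.swap_mul_self, one_mul]
  rw [eq_inv_mul_iff_mul_eq, ← mul_assoc]
  exact key
end

section
/- Fix an integer k ≥ 1 and let n ≥ 0. Let S = (v_k, …, v_i, …, v_1) ∈ A_n and let S' = (v_k, …, ε·v_i, …, v_1) be the sentence obtained from S by prepending a placeholder at the left end of the i-th word (and reducing). Then S ∈ J_n if and only if S' ∈ J_n. -/
/-- A word: a finite sequence of letters (`some a` for a positive integer `a`) and
placeholders (`none` for `ε`), written left to right (and read right to left). -/
abbrev Word : Type := List (Option ℕ+)

/-- A word is reduced if it has no two consecutive placeholders. -/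
def WordReduced (w : Word) : Prop :=
  List.Chain' (fun a b => ¬(a = none ∧ b = none)) w

/-- Reduce a word by fusing consecutive placeholders `εε` into a single `ε`. -/
def reduceWord : Word → Word
  | [] => []
  | [a] => [a]
  | none :: none :: rest => reduceWord (none :: rest)
  | a :: b :: rest => a :: reduceWord (b :: rest)

/-- The map `α_{m,·}` on words: replace each letter larger than `m` by the
placeholder `ε`, then reduce. -/
def alphaWord (m : ℕ) (w : Word) : Word :=
  reduceWord (w.map fun a =>
    match a with
    | none => none
    | some x => if (x : ℕ) ≤ m then some x else none)

/-- Auxiliary insertion, acting on the reversed (reading-order) word: insert the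
letter `x` immediately before the first placeholder, or at the very end if there
is no placeholder. -/
def insertAux (x : ℕ+) : List (Option ℕ+) → List (Option ℕ+)
  | [] => [some x]
  | none :: rest => some x :: none :: rest
  | a :: rest => a :: insertAux x rest

/-- Insert the letter `x` into a word: immediately to the right of the rightmost
placeholder if the word contains one, and at the left end otherwise. -/
def insertLetter (x : ℕ+) (w : Word) : Word :=
  (insertAux x w.reverse).reverse

/-- A sentence of `k` words. -/
abbrev Sentence (k : ℕ) := Fin k → Word

/-- Membership in `A_n`: all `k` words are reduced, each of the letters `1, …, n`
occurs exactly once in the sentence, and no other letter occurs. -/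
def InA (k n : ℕ) (S : Sentence k) : Prop :=
  (∀ i, WordReduced (S i)) ∧
    ∀ a : ℕ+, (∑ i : Fin k, (S i).count (some a)) = if (a : ℕ) ≤ n then 1 else 0

/-- The underlying map of `f_n^i` on sentences: insert the letter `n+1` into the
`i`-th word (to the right of the rightmost placeholder, or at the left end). -/
def finsert (k n : ℕ) (i : Fin k) (S : Sentence k) : Sentence k :=
  Function.update S i (insertLetter ⟨n + 1, Nat.succ_pos n⟩ (S i))

/-- The map `α_{m,·}` on sentences. -/
def alphaS (k m : ℕ) (S : Sentence k) : Sentence k := fun i => alphaWord m (S i)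

/-- The sets `I_n`: `I_0 = ∅` and `I_{n+1} = ⋃_{i} image (f_n^i restricted to B_n)`,
where `B_n = A_n - ⋃_{1 ≤ j ≤ n} α_{j,n}⁻¹(I_j)` (inlined below). -/
def Iset (k : ℕ) : ℕ → Set (Sentence k)
  | 0 => ∅
  | n + 1 =>
    {S | ∃ i : Fin k, ∃ T : Sentence k,
      ((InA k n T ∧ ∀ (j : ℕ) (_hj1 : 1 ≤ j) (_hj2 : j ≤ n), alphaS k j T ∉ Iset k j) ∧
        S = finsert k n i T)}
  termination_by n => n
  decreasing_by omega

/-- The set `B_n = A_n - J_n`. -/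
def Bset (k n : ℕ) : Set (Sentence k) :=
  {S | InA k n S ∧ ∀ (j : ℕ) (_hj1 : 1 ≤ j) (_hj2 : j ≤ n), alphaS k j S ∉ Iset k j}

/-- The set `J_n = ⋃_{1 ≤ j ≤ n} α_{j,n}⁻¹(I_j) ⊆ A_n`. -/
def Jset (k n : ℕ) : Set (Sentence k) :=
  {S | InA k n S ∧ ∃ j : ℕ, 1 ≤ j ∧ j ≤ n ∧ alphaS k j S ∈ Iset k j}


/-! Prepending a placeholder to a word commutes with inserting a letter (because insertion
commutes with reduction) and with the truncations `α_m`, and it preserves membership in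
`A_n`. By strong induction on `n` this makes every `I_n`, hence every `B_n` and `J_n`,
invariant under prepending a placeholder to the `i`-th word. For the inverse direction a
preimage under `f_m^{i'}` is produced by dropping the leading placeholder again, which also
commutes with insertion. -/

lemma head?_reduceWord (l : Word) : (reduceWord l).head? = l.head? := by
  induction l using reduceWord.induct with
  | case1 => rfl
  | case2 => rfl
  | case3 rest ih => simpa [reduceWord] using ih
  | case4 a b rest h ih => simp [reduceWord.eq_4 _ _ _ h]

lemma reduceWord_cons (a : Option ℕ+) (l : Word) :
    reduceWord (a :: l) =
      if a = none ∧ l.head? = some none then reduceWord l else a :: reduceWord l := by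
  match a, l with
  | a, [] => simp [reduceWord]
  | none, none :: rest => simp [reduceWord]
  | none, some b :: rest => simp [reduceWord]
  | some c, b :: rest => simp [reduceWord]

lemma wordReduced_reduceWord (l : Word) : WordReduced (reduceWord l) := by
  induction l using reduceWord.induct with
  | case1 => exact List.isChain_nil
  | case2 => exact List.isChain_singleton _
  | case3 rest ih => simpa [reduceWord] using ih
  | case4 a b rest h ih =>
    rw [reduceWord.eq_4 _ _ _ h, WordReduced, List.Chain', List.isChain_cons]
    refine ⟨fun y hy => ?_, ih⟩
    rw [head?_reduceWord, List.head?_cons, Option.mem_def, Option.some.injEq] at hy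
    subst hy
    exact fun hab => h hab.1 hab.2

lemma reduceWord_eq_self {l : Word} (h : WordReduced l) : reduceWord l = l := by
  induction l using reduceWord.induct with
  | case1 => rfl
  | case2 => rfl
  | case3 rest ih => exact absurd ⟨rfl, rfl⟩ (List.isChain_cons_cons.mp h).1
  | case4 a b rest hab ih => rw [reduceWord.eq_4 _ _ _ hab, ih (List.IsChain.tail h)]

lemma count_reduceWord (l : Word) (a : ℕ+) :
    (reduceWord l).count (some a) = l.count (some a) := by
  induction l using reduceWord.induct with
  | case1 => rfl
  | case2 => rfl
  | case3 rest ih => simp_all [reduceWord]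
  | case4 b c rest h ih => simp_all [reduceWord.eq_4 _ _ _ h, List.count_cons]

lemma none_mem_reduceWord_iff (l : Word) : none ∈ reduceWord l ↔ none ∈ l := by
  induction l using reduceWord.induct with
  | case1 => rfl
  | case2 => rfl
  | case3 rest ih => simpa [reduceWord] using ih
  | case4 a b rest h ih => simp_all [reduceWord.eq_4 _ _ _ h]

lemma reduceWord_cons_reduceWord (a : Option ℕ+) (l : Word) :
    reduceWord (a :: reduceWord l) = reduceWord (a :: l) := by
  rw [reduceWord_cons, reduceWord_cons a l, head?_reduceWord,
    reduceWord_eq_self (wordReduced_reduceWord l)]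

lemma reduceWord_map_reduceWord {f : Option ℕ+ → Option ℕ+} (hf : f none = none) (l : Word) :
    reduceWord ((reduceWord l).map f) = reduceWord (l.map f) := by
  induction l using reduceWord.induct with
  | case1 => rfl
  | case2 => rfl
  | case3 rest ih => simp only [reduceWord, ih, List.map_cons, hf]
  | case4 a b rest h ih =>
    rw [reduceWord.eq_4 _ _ _ h, List.map_cons, List.map_cons, ← reduceWord_cons_reduceWord (f a),
      ih, reduceWord_cons_reduceWord]

lemma insertAux_append_of_none_not_mem {x : ℕ+} {l : List (Option ℕ+)} (h : none ∉ l)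
    (t : List (Option ℕ+)) : insertAux x (l ++ t) = l ++ insertAux x t := by
  induction l with
  | nil => rfl
  | cons a rest ih =>
    match a with
    | none => exact absurd List.mem_cons_self h
    | some b =>
      simp only [List.cons_append, insertAux]
      rw [ih (List.not_mem_of_not_mem_cons h)]

lemma insertAux_append_of_none_mem {x : ℕ+} {l : List (Option ℕ+)} (h : none ∈ l)
    (t : List (Option ℕ+)) : insertAux x (l ++ t) = insertAux x l ++ t := by
  induction l with
  | nil => simp at h
  | cons a rest ih =>
    match a with
    | none => simp [insertAux]
    | some b =>
      simp only [List.cons_append, insertAux]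
      rw [ih (by simpa using h)]

lemma insertLetter_of_none_not_mem {x : ℕ+} {w : Word} (h : none ∉ w) :
    insertLetter x w = some x :: w := by
  simpa [insertLetter, insertAux] using
    insertAux_append_of_none_not_mem (x := x) (l := w.reverse) (by simpa using h) []

lemma insertLetter_none_cons (x : ℕ+) (w : Word) :
    insertLetter x (none :: w) = none :: insertLetter x w := by
  by_cases h : none ∈ w
  · rw [insertLetter, insertLetter, List.reverse_cons,
      insertAux_append_of_none_mem (by simpa using h)]
    simp
  · rw [insertLetter, List.reverse_cons,
      insertAux_append_of_none_not_mem (by simpa using h), insertLetter_of_none_not_mem h]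
    simp [insertAux]

lemma insertLetter_some_cons_of_none_mem {x b : ℕ+} {w : Word} (h : none ∈ w) :
    insertLetter x (some b :: w) = some b :: insertLetter x w := by
  rw [insertLetter, insertLetter, List.reverse_cons,
    insertAux_append_of_none_mem (by simpa using h)]
  simp

lemma head?_insertLetter_some_cons_ne (x b : ℕ+) (w : Word) :
    (insertLetter x (some b :: w)).head? ≠ some none := by
  by_cases h : none ∈ w
  · simp [insertLetter_some_cons_of_none_mem h]
  · simp [insertLetter_of_none_not_mem (show none ∉ some b :: w by simpa using h)]

lemma insertLetter_reduceWord (x : ℕ+) (l : Word) :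
    insertLetter x (reduceWord l) = reduceWord (insertLetter x l) := by
  induction l using reduceWord.induct with
  | case1 => rfl
  | case2 a => cases a <;> rfl
  | case3 rest ih => simp only [reduceWord.eq_3, ih, insertLetter_none_cons]
  | case4 a b rest h ih =>
    rw [reduceWord.eq_4 _ _ _ h]
    match a, b with
    | none, none => exact absurd rfl (h rfl)
    | none, some c =>
      rw [insertLetter_none_cons, insertLetter_none_cons, ih, reduceWord_cons]
      simp [head?_insertLetter_some_cons_ne]
    | some c, b =>
      by_cases hm : none ∈ b :: rest
      · rw [insertLetter_some_cons_of_none_mem ((none_mem_reduceWord_iff _).mpr hm),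
          insertLetter_some_cons_of_none_mem hm, ih, reduceWord_cons]
        simp
      · have hm' : none ∉ some c :: b :: rest := by simpa using hm
        rw [insertLetter_of_none_not_mem hm', insertLetter_of_none_not_mem
          (by simpa [none_mem_reduceWord_iff] using hm'), reduceWord.eq_4 (some x) (some c) _ (by simp),
          reduceWord.eq_4 _ _ _ h]

def prependPlaceholder (w : Word) : Word := reduceWord (none :: w)

def dropPlaceholder : Word → Word
  | none :: w => w
  | w => w

lemma wordReduced_prependPlaceholder (w : Word) : WordReduced (prependPlaceholder w) :=
  wordReduced_reduceWord _

lemma count_prependPlaceholder (w : Word) (a : ℕ+) :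
    (prependPlaceholder w).count (some a) = w.count (some a) := by
  simp [prependPlaceholder, count_reduceWord]

lemma prependPlaceholder_insertLetter (x : ℕ+) (w : Word) :
    prependPlaceholder (insertLetter x w) = insertLetter x (prependPlaceholder w) := by
  rw [prependPlaceholder, prependPlaceholder, insertLetter_reduceWord, insertLetter_none_cons]

lemma alphaWord_prependPlaceholder (m : ℕ) (w : Word) :
    alphaWord m (prependPlaceholder w) = prependPlaceholder (alphaWord m w) := by
  rw [alphaWord, prependPlaceholder, reduceWord_map_reduceWord rfl, List.map_cons,
    prependPlaceholder, alphaWord, reduceWord_cons_reduceWord]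

lemma prependPlaceholder_comp_dropPlaceholder :
    prependPlaceholder ∘ dropPlaceholder = prependPlaceholder := by
  funext w
  match w with
  | none :: w => rfl
  | [] => rfl
  | some a :: w => rfl

lemma wordReduced_dropPlaceholder {w : Word} (h : WordReduced w) :
    WordReduced (dropPlaceholder w) := by
  match w with
  | none :: w => exact h.tail
  | [] => exact h
  | some a :: w => exact h

lemma dropPlaceholder_of_head?_ne {w : Word} (h : w.head? ≠ some none) :
    dropPlaceholder w = w := by
  match w with
  | none :: w => exact absurd rfl h
  | [] => rfl
  | some a :: w => rfl

lemma dropPlaceholder_insertLetter (x : ℕ+) (w : Word) :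
    dropPlaceholder (insertLetter x w) = insertLetter x (dropPlaceholder w) := by
  match w with
  | none :: w => rw [insertLetter_none_cons]; rfl
  | [] => rfl
  | some a :: w =>
    rw [dropPlaceholder_of_head?_ne (head?_insertLetter_some_cons_ne x a w)]
    rfl

lemma prependPlaceholder_eq_self_or_dropPlaceholder_eq {w : Word} (h : WordReduced w) :
    prependPlaceholder w = w ∨ dropPlaceholder (prependPlaceholder w) = w := by
  rw [prependPlaceholder, reduceWord_cons, reduceWord_eq_self h]
  by_cases hw : w.head? = some none
  · simp [hw]
  · simp [hw, dropPlaceholder]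

section Sentences

variable {k : ℕ}

def updateWord (i : Fin k) (f : Word → Word) (S : Sentence k) : Sentence k :=
  Function.update S i (f (S i))

lemma updateWord_updateWord (i : Fin k) (f g : Word → Word) (S : Sentence k) :
    updateWord i g (updateWord i f S) = updateWord i (g ∘ f) S := by
  simp [updateWord]

lemma updateWord_eq_self {i : Fin k} {f : Word → Word} {S : Sentence k} (h : f (S i) = S i) :
    updateWord i f S = S :=
  Function.update_eq_self_iff.mpr h

lemma alphaS_updateWord {m : ℕ} {f : Word → Word} (hf : ∀ w, alphaWord m (f w) = f (alphaWord m w))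
    (i : Fin k) (S : Sentence k) :
    alphaS k m (updateWord i f S) = updateWord i f (alphaS k m S) := by
  funext j
  by_cases hj : j = i
  · subst hj; simp [alphaS, updateWord, hf]
  · simp [alphaS, updateWord, Function.update_of_ne hj]

lemma finsert_updateWord {n : ℕ} {f : Word → Word}
    (hf : ∀ w, f (insertLetter ⟨n + 1, n.succ_pos⟩ w) = insertLetter ⟨n + 1, n.succ_pos⟩ (f w))
    (i i' : Fin k) (S : Sentence k) :
    finsert k n i' (updateWord i f S) = updateWord i f (finsert k n i' S) := by
  funext j
  by_cases hj : j = i <;> by_cases hj' : j = i' <;> subst_vars <;>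
    simp [finsert, updateWord, Function.update_of_ne, *]

lemma inA_updateWord_iff {n : ℕ} {i : Fin k} {f : Word → Word} {S : Sentence k}
    (hred : WordReduced (f (S i)) ↔ WordReduced (S i))
    (hcount : ∀ a : ℕ+, (f (S i)).count (some a) = (S i).count (some a)) :
    InA k n (updateWord i f S) ↔ InA k n S := by
  have hcongr : ∀ {α : Type} (g : Word → α), g (f (S i)) = g (S i) →
      ∀ j, g (updateWord i f S j) = g (S j) := by
    intro α g hg j
    by_cases hj : j = i
    · subst hj; simpa [updateWord] using hg
    · simp [updateWord, Function.update_of_ne hj]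
  simp only [InA, hcongr WordReduced (propext hred), fun a => hcongr _ (hcount a)]

def PrependInvariant (i : Fin k) (X : Set (Sentence k)) : Prop :=
  ∀ T : Sentence k, WordReduced (T i) → (updateWord i prependPlaceholder T ∈ X ↔ T ∈ X)

lemma mem_Iset_succ {m : ℕ} {S : Sentence k} :
    S ∈ Iset k (m + 1) ↔ ∃ i' : Fin k, ∃ T ∈ Bset k m, S = finsert k m i' T := by
  rw [Iset]
  rfl

lemma PrependInvariant.alphaS_mem_iff {i : Fin k} {j : ℕ} (h : PrependInvariant i (Iset k j))
    (S : Sentence k) :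
    alphaS k j (updateWord i prependPlaceholder S) ∈ Iset k j ↔ alphaS k j S ∈ Iset k j := by
  rw [alphaS_updateWord (alphaWord_prependPlaceholder j)]
  exact h _ (wordReduced_reduceWord _)

lemma inA_updateWord_prependPlaceholder_iff {n : ℕ} {i : Fin k} {S : Sentence k}
    (hS : WordReduced (S i)) :
    InA k n (updateWord i prependPlaceholder S) ↔ InA k n S :=
  inA_updateWord_iff (iff_of_true (wordReduced_prependPlaceholder _) hS)
    (count_prependPlaceholder _)

lemma prependInvariant_Bset {i : Fin k} {m : ℕ} (h : ∀ j ≤ m, PrependInvariant i (Iset k j)) :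
    PrependInvariant i (Bset k m) := by
  intro T hT
  simp only [Bset, Set.mem_ofPred_eq, inA_updateWord_prependPlaceholder_iff hT]
  exact and_congr_right fun _ => forall_congr' fun j => forall_congr' fun _ =>
    forall_congr' fun hj => not_congr ((h j hj).alphaS_mem_iff T)

lemma prependInvariant_Iset_succ {i : Fin k} {m : ℕ} (h : PrependInvariant i (Bset k m)) :
    PrependInvariant i (Iset k (m + 1)) := by
  intro T hT
  constructor
  · intro hP
    obtain ⟨i', U, hU, hPT⟩ := mem_Iset_succ.mp hP
    rcases prependPlaceholder_eq_self_or_dropPlaceholder_eq hT with hself | hdrop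
    · rwa [updateWord_eq_self (f := prependPlaceholder) hself] at hP
    have hUred : WordReduced (U i) := hU.1.1 i
    have hDU : updateWord i dropPlaceholder U ∈ Bset k m := by
      refine (h _ (by simpa [updateWord] using wordReduced_dropPlaceholder hUred)).mp ?_
      rw [updateWord_updateWord, prependPlaceholder_comp_dropPlaceholder]
      exact (h U hUred).mpr hU
    refine mem_Iset_succ.mpr ⟨i', _, hDU, ?_⟩
    rw [finsert_updateWord (dropPlaceholder_insertLetter _), ← hPT, updateWord_updateWord,
      updateWord_eq_self (f := dropPlaceholder ∘ prependPlaceholder) hdrop]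
  · intro hTI
    obtain ⟨i', U, hU, rfl⟩ := mem_Iset_succ.mp hTI
    exact mem_Iset_succ.mpr ⟨i', _, (h U (hU.1.1 i)).mpr hU,
      (finsert_updateWord (prependPlaceholder_insertLetter _) i i' U).symm⟩

lemma prependInvariant_Iset (i : Fin k) (n : ℕ) : PrependInvariant i (Iset k n) := by
  induction n using Nat.strong_induction_on with
  | _ n ih =>
    match n with
    | 0 => intro T _; simp [Iset]
    | m + 1 => exact prependInvariant_Iset_succ (prependInvariant_Bset fun j hj => ih j (by omega))

lemma prependInvariant_Jset (i : Fin k) (n : ℕ) : PrependInvariant i (Jset k n) := by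
  intro T hT
  simp only [Jset, Set.mem_ofPred_eq, inA_updateWord_prependPlaceholder_iff hT,
    (prependInvariant_Iset i _).alphaS_mem_iff]

end Sentences

theorem stmt_11_general (k : ℕ) (n : ℕ) (S : Sentence k)
    (hSA : InA k n S) (i : Fin k) :
    S ∈ Jset k n ↔ Function.update S i (reduceWord (none :: S i)) ∈ Jset k n :=
  (prependInvariant_Jset i n S (hSA.1 i)).symm

/-- Fix `k ≥ 1` and `n ≥ 0`. Let `S = (v_k, …, v_i, …, v_1) ∈ A_n` and
let `S'` be obtained from `S` by prepending a placeholder at the left end of the `i`-th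
word (and reducing). Then `S ∈ J_n` if and only if `S' ∈ J_n`. -/
theorem stmt_11 (k : ℕ) (hk : 1 ≤ k) (n : ℕ) (S : Sentence k)
    (hSA : InA k n S) (i : Fin k) :
    S ∈ Jset k n ↔ Function.update S i (reduceWord (none :: S i)) ∈ Jset k n :=
  stmt_11_general k n S hSA i
end
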